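/- (Generalized Watts theorem, fullness) Let A be a cocomplete k-linear category and 𝓕, 𝓖 objects of A_R. For every natural transformation τ : (− ⊗_R 𝓕) → (− ⊗_R 𝓖) there exists a morphism φ ∈ Hom_R(𝓕, 𝓖), namely φ = ξ_𝓖^{-1} ∘ τ_R ∘ ξ_𝓕, such that τ_M = M ⊗ φ for every right R-module M. -/

import Mathlib

open CategoryTheory CategoryTheory.Limits MulOpposite

universe u

section Preamble

variable (k : Type*) [CommRing k] (R : Type u) [Ring R] [Algebra k R]
variable (A : Type*) [Category.{u} A] [Preadditive A] [CategoryTheory.Linear k A]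

/-- A left `R`-module in the `k`-linear category `A`: an object together with a
ring homomorphism `ρ : R → End 𝓕` which is `k`-linear, i.e. a `k`-algebra homomorphism. -/
structure LMod where
  X : A
  ρ : R →+* End X
  algebraMap_smul' : ∀ a : k, ρ (algebraMap k R a) = a • (𝟙 X)

variable {k R A}

/-- the `k`-module structure on right `R`-modules obtained by restriction of scalars -/
noncomputable instance (M : ModuleCat.{u} Rᵐᵒᵖ) : Module k M :=
  RestrictScalars.module k Rᵐᵒᵖ M

instance (M : ModuleCat.{u} Rᵐᵒᵖ) : IsScalarTower k Rᵐᵒᵖ M :=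
  RestrictScalars.isScalarTower k Rᵐᵒᵖ M

/-- The `k`-linear structure on the category of right `R`-modules, `a • m = m · γ(a)`. -/
noncomputable instance : CategoryTheory.Linear k (ModuleCat.{u} Rᵐᵒᵖ) where
  homModule _ _ := ModuleCat.Hom.instModule
  smul_comp := by
    intros
    ext
    simp only [ModuleCat.hom_comp, ModuleCat.hom_smul, LinearMap.comp_apply]
    rw [LinearMap.smul_apply, LinearMap.smul_apply, LinearMap.map_smul_of_tower]
    rfl

/-- `Hom_A(𝓕, N)` is a right `R`-module via `α · r := ρ(r) ≫ α`. -/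
instance homRMod (F : LMod k R A) (N : A) : Module Rᵐᵒᵖ (F.X ⟶ N) where
  smul r α := F.ρ r.unop ≫ α
  one_smul α := by show F.ρ _ ≫ α = α; simp
  mul_smul r s α := by
    show F.ρ _ ≫ α = F.ρ _ ≫ F.ρ _ ≫ α
    rw [unop_mul, map_mul, End.mul_def, Category.assoc]
  smul_zero r := by show _ ≫ (0 : F.X ⟶ N) = 0; simp
  smul_add r α β := by show _ ≫ (α + β) = _ ≫ α + _ ≫ β; simp
  add_smul r s α := by
    show F.ρ _ ≫ α = F.ρ _ ≫ α + F.ρ _ ≫ α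
    rw [MulOpposite.unop_add, map_add]; exact Preadditive.add_comp _ _ _ _ _ _
  zero_smul α := by show F.ρ _ ≫ α = 0; rw [MulOpposite.unop_zero, map_zero]; exact Limits.zero_comp

lemma homRMod_smul_def (F : LMod k R A) {N : A} (r : Rᵐᵒᵖ) (α : F.X ⟶ N) :
    r • α = F.ρ r.unop ≫ α := rfl

/-- The functor `Hom_A(𝓕, -) : A ⥤ Mod R`. -/
noncomputable def homFunctor (F : LMod k R A) : A ⥤ ModuleCat.{u} Rᵐᵒᵖ where
  obj N := ModuleCat.of Rᵐᵒᵖ (F.X ⟶ N)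
  map {N N'} f := ModuleCat.ofHom
    { toFun := fun α => α ≫ f
      map_add' := fun α β => Preadditive.add_comp _ _ _ _ _ _
      map_smul' := fun r α => by
        show (F.ρ r.unop ≫ α) ≫ f = F.ρ r.unop ≫ (α ≫ f)
        rw [Category.assoc] }
  map_id N := by apply ModuleCat.hom_ext; apply LinearMap.ext; intro α; exact Category.comp_id α
  map_comp f g := by
    apply ModuleCat.hom_ext; apply LinearMap.ext; intro α; exact (Category.assoc _ _ _).symm

/-- `R` as a right module over itself. -/
noncomputable abbrev RR : ModuleCat.{u} Rᵐᵒᵖ := ModuleCat.of Rᵐᵒᵖ Rᵐᵒᵖ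

variable (R) in
/-- left multiplication `μ_x` by `x` on `R`, a right `R`-module map -/
def mulMap (x : R) : (RR : ModuleCat.{u} Rᵐᵒᵖ) ⟶ RR := ModuleCat.ofHom
  { toFun := fun r => op (x * r.unop)
    map_add' := fun r s => by
      apply unop_injective
      show x * (r + s).unop = _
      rw [show (r + s).unop = r.unop + s.unop from rfl, mul_add]; rfl
    map_smul' := fun s t => by
      apply unop_injective
      show x * (s • t).unop = ((s • op (x * t.unop)).unop)
      rw [show (s • t).unop = t.unop * s.unop from rfl,
        show (s • op (x * t.unop)).unop = (x * t.unop) * s.unop from rfl, mul_assoc] }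

/-- Morphisms `𝓕 → 𝓖` of left `R`-modules in `A` induce natural transformations
`Hom_A(𝓖,-) ⟶ Hom_A(𝓕,-)`. -/
noncomputable def homPre {F G : LMod k R A} (φ : F.X ⟶ G.X)
    (h : ∀ r : R, F.ρ r ≫ φ = φ ≫ G.ρ r) : homFunctor G ⟶ homFunctor F where
  app N := ModuleCat.ofHom
    { toFun := fun α => φ ≫ α
      map_add' := fun α β => Preadditive.comp_add _ _ _ _ _ _
      map_smul' := fun r α => by
        show φ ≫ G.ρ r.unop ≫ α = F.ρ r.unop ≫ φ ≫ α
        rw [← Category.assoc, ← h, Category.assoc] }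
  naturality N N' f := by
    apply ModuleCat.hom_ext; apply LinearMap.ext; intro α; exact (Category.assoc _ _ _).symm

/-- `M ⊗ φ` : the natural transformation `- ⊗_R 𝓕 ⟶ - ⊗_R 𝓖` induced by `φ : 𝓕 ⟶ 𝓖`,
obtained as the conjugate (mate) of `homPre φ`. -/
noncomputable def tensorMap {F G : LMod k R A} {TF TG : ModuleCat.{u} Rᵐᵒᵖ ⥤ A}
    (adjF : TF ⊣ homFunctor F) (adjG : TG ⊣ homFunctor G) (φ : F.X ⟶ G.X)
    (h : ∀ r : R, F.ρ r ≫ φ = φ ≫ G.ρ r) : TF ⟶ TG :=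
  (conjugateEquiv adjG adjF).symm (homPre φ h)

/-- The canonical map `ξ_𝓕 : 𝓕 ⟶ R ⊗_R 𝓕`. -/
noncomputable def xi {F : LMod k R A} {TF : ModuleCat.{u} Rᵐᵒᵖ ⥤ A}
    (adjF : TF ⊣ homFunctor F) : F.X ⟶ TF.obj RR :=
  (adjF.unit.app RR) (1 : Rᵐᵒᵖ)

end Preamble

/-!
Through the adjunctions `- ⊗_R 𝓕 ⊣ Hom_A(𝓕, -)`, natural transformations
`(- ⊗_R 𝓕) ⟶ (- ⊗_R 𝓖)` correspond to natural transformations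
`σ : Hom_A(𝓖, -) ⟶ Hom_A(𝓕, -)`. By Yoneda, `σ` is precomposition with
`φ = σ_𝓖(𝟙)`, and `R`-linearity of `σ_𝓖` makes `φ` a morphism of left `R`-modules.
The formula for `τ_R` is the compatibility of the unit with conjugation, evaluated at `1 ∈ R`.
-/

section

variable {k : Type*} [CommRing k] {R : Type u} [Ring R] [Algebra k R]
variable {A : Type*} [Category.{u} A] [Preadditive A] [CategoryTheory.Linear k A]
variable {F G : LMod k R A}

lemma homFunctor_natTrans_app_eq_comp (σ : homFunctor G ⟶ homFunctor F) {N : A}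
    (α : G.X ⟶ N) : σ.app N α = σ.app G.X (𝟙 G.X) ≫ α := by
  have hnat : σ.app N (𝟙 G.X ≫ α) = σ.app G.X (𝟙 G.X) ≫ α :=
    congrArg (fun f => ModuleCat.Hom.hom f (𝟙 G.X)) (σ.naturality α)
  rwa [Category.id_comp] at hnat

lemma rho_comp_homFunctor_natTrans_app_id (σ : homFunctor G ⟶ homFunctor F) (r : R) :
    F.ρ r ≫ σ.app G.X (𝟙 G.X) = σ.app G.X (𝟙 G.X) ≫ G.ρ r := by
  have hlin : σ.app G.X (op r • 𝟙 G.X) = op r • σ.app G.X (𝟙 G.X) :=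
    (σ.app G.X).hom.map_smul _ _
  have hsmul_id : (op r : Rᵐᵒᵖ) • 𝟙 G.X = G.ρ r := by
    rw [homRMod_smul_def, unop_op, Category.comp_id]
  rw [hsmul_id, homFunctor_natTrans_app_eq_comp] at hlin
  exact hlin.symm

lemma exists_homPre_eq (σ : homFunctor G ⟶ homFunctor F) :
    ∃ (φ : F.X ⟶ G.X) (h : ∀ r : R, F.ρ r ≫ φ = φ ≫ G.ρ r), homPre φ h = σ :=
  ⟨σ.app G.X (𝟙 G.X), rho_comp_homFunctor_natTrans_app_id σ, by
    ext N α
    exact (homFunctor_natTrans_app_eq_comp σ α).symm⟩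

lemma xi_comp_tensorMap_app {TF TG : ModuleCat.{u} Rᵐᵒᵖ ⥤ A}
    (adjF : TF ⊣ homFunctor F) (adjG : TG ⊣ homFunctor G) (φ : F.X ⟶ G.X)
    (h : ∀ r : R, F.ρ r ≫ φ = φ ≫ G.ρ r) :
    xi adjF ≫ (tensorMap adjF adjG φ h).app RR = φ ≫ xi adjG :=
  (congrArg (fun f => ModuleCat.Hom.hom f (1 : Rᵐᵒᵖ))
    (unit_conjugateEquiv_symm adjG adjF (homPre φ h) RR)).symm

end

theorem generalized_watts_full_general
    (k : Type*) [CommRing k] (R : Type u) [Ring R] [Algebra k R]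
    (A : Type*) [Category.{u} A] [Preadditive A]
    [CategoryTheory.Linear k A]
    {F G : LMod k R A} {TF TG : ModuleCat.{u} Rᵐᵒᵖ ⥤ A}
    (adjF : TF ⊣ homFunctor F) (adjG : TG ⊣ homFunctor G)
    (τ : TF ⟶ TG) :
    ∃ (φ : F.X ⟶ G.X) (h : ∀ r : R, F.ρ r ≫ φ = φ ≫ G.ρ r),
      tensorMap adjF adjG φ h = τ ∧
      xi adjF ≫ τ.app (RR : ModuleCat.{u} Rᵐᵒᵖ) = φ ≫ xi adjG := by
  obtain ⟨φ, h, hσ⟩ := exists_homPre_eq (conjugateEquiv adjG adjF τ)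
  have hτ : tensorMap adjF adjG φ h = τ := by
    rw [tensorMap, hσ, Equiv.symm_apply_apply]
  exact ⟨φ, h, hτ, hτ ▸ xi_comp_tensorMap_app adjF adjG φ h⟩

/-- **Generalized Watts theorem (fullness).** Every natural transformation
`τ : (- ⊗_R 𝓕) ⟶ (- ⊗_R 𝓖)` is induced by a morphism `φ : 𝓕 ⟶ 𝓖` of left
`R`-modules in `A` — namely `φ = ξ_𝓖⁻¹ ∘ τ_R ∘ ξ_𝓕` — so that `τ_M = M ⊗ φ`
for every right `R`-module `M`. -/
theorem generalized_watts_full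
    (k : Type*) [CommRing k] (R : Type u) [Ring R] [Algebra k R]
    (A : Type*) [Category.{u} A] [Preadditive A] [HasColimits A]
    [CategoryTheory.Linear k A]
    {F G : LMod k R A} {TF TG : ModuleCat.{u} Rᵐᵒᵖ ⥤ A}
    (adjF : TF ⊣ homFunctor F) (adjG : TG ⊣ homFunctor G)
    (τ : TF ⟶ TG) :
    ∃ (φ : F.X ⟶ G.X) (h : ∀ r : R, F.ρ r ≫ φ = φ ≫ G.ρ r),
      tensorMap adjF adjG φ h = τ ∧
      xi adjF ≫ τ.app (RR : ModuleCat.{u} Rᵐᵒᵖ) = φ ≫ xi adjG :=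
  generalized_watts_full_general k R A adjF adjG τ
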